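/- arXiv:2510.22158 — 2 statements merged into one kernel-verified Lean document; each statement's English description precedes it below -/
import Mathlib

section
/- Let μ be the exact flow μ^{π̄_k} induced by policy π̄_k and G the learned flow with d(μ, G) ≤ ε. Define the true exploitability e_true = J(BR(μ), μ) - J(π̄_k, μ) and tractable exploitability e = J(BR(G), G) - J(π̄_k, G), where BR(ν) denotes a best response to ν. If J is L-Lipschitz in the flow, then |e_true - e| ≤ 4L·ε. -/
/-!
The optimal value `ν ↦ J (BR ν) ν = max_π J π ν` is a pointwise maximum of `L`-Lipschitz
functions, hence itself `L`-Lipschitz; so is `ν ↦ J πbar ν`. The two exploitabilities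
therefore differ by at most `2 L d(μ, G) ≤ 2 L ε`, which is stronger than the bound `4 L ε`.
-/

theorem abs_sub_le_of_maximizers {ι : Type*} {f g : ι → ℝ} {c : ℝ}
    (hfg : ∀ i, |f i - g i| ≤ c) {a b : ι} (ha : ∀ i, f i ≤ f a) (hb : ∀ i, g i ≤ g b) :
    |f a - g b| ≤ c :=
  abs_sub_le_iff.2
    ⟨by linarith [hb a, (abs_le.1 (hfg a)).2], by linarith [ha b, (abs_le.1 (hfg b)).1]⟩

theorem abs_value_sub_value_le {Policy Flow : Type*} [MetricSpace Flow]
    {J : Policy → Flow → ℝ} {L : ℝ}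
    (hLip : ∀ (π : Policy) (μ₁ μ₂ : Flow), |J π μ₁ - J π μ₂| ≤ L * dist μ₁ μ₂)
    {BR : Flow → Policy} (hBR : ∀ (ν : Flow) (π : Policy), J π ν ≤ J (BR ν) ν) (μ G : Flow) :
    |J (BR μ) μ - J (BR G) G| ≤ L * dist μ G :=
  abs_sub_le_of_maximizers (fun π ↦ hLip π μ G) (hBR μ) (hBR G)

/-- Closeness of true and tractable exploitability: if `d(μ, G) ≤ ε` and `J` is
L-Lipschitz in the flow, then `|e_true - e| ≤ 4L·ε` where
`e_true = J(BR(μ), μ) - J(πbar, μ)` and `e = J(BR(G), G) - J(πbar, G)`. -/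
theorem stmt_5 {Policy Flow : Type*} [MetricSpace Flow]
    (J : Policy → Flow → ℝ) (L : ℝ) (hL : 0 < L)
    (hLip : ∀ (π : Policy) (μ₁ μ₂ : Flow), |J π μ₁ - J π μ₂| ≤ L * dist μ₁ μ₂)
    (BR : Flow → Policy)
    (hBR : ∀ (ν : Flow) (π : Policy), J π ν ≤ J (BR ν) ν)
    (πbar : Policy) (μ G : Flow) (ε : ℝ) (hd : dist μ G ≤ ε) :
    |(J (BR μ) μ - J πbar μ) - (J (BR G) G - J πbar G)| ≤ 4 * L * ε := by
  have hε : 0 ≤ ε := dist_nonneg.trans hd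
  calc |(J (BR μ) μ - J πbar μ) - (J (BR G) G - J πbar G)|
      = |(J (BR μ) μ - J (BR G) G) - (J πbar μ - J πbar G)| := by ring_nf
    _ ≤ |J (BR μ) μ - J (BR G) G| + |J πbar μ - J πbar G| := abs_sub _ _
    _ ≤ L * dist μ G + L * dist μ G :=
        add_le_add (abs_value_sub_value_le hLip hBR μ G) (hLip πbar μ G)
    _ ≤ 4 * L * ε := by nlinarith
end

section
/- A strictly monotone increasing rational-quadratic spline segment is invertible: let g(ξ) = α(ξ)/β(ξ) on [0,1] with α(ξ) = s·y₁·ξ² + (y₀δ₁ + y₁δ₀)ξ(1-ξ) + s·y₀(1-ξ)², β(ξ) = s·ξ² + (δ₀+δ₁)ξ(1-ξ) + s(1-ξ)², where s = y₁ - y₀ > 0 and δ₀, δ₁ > 0. Then β(ξ) > 0 on [0,1], g(0) = y₀, g(1) = y₁, and g is strictly increasing on [0,1]. -/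
/-! The denominator is a sum of nonnegative terms, with `s ξ² + s (1 - ξ)² > 0`. For monotonicity,
the cross-difference `α b β a - α a β b` factors as `(b - a) s²` times a nonnegative combination
of the Bernstein-like products `ab`, `(1 - a)(1 - b)`, `a(1 - b) + b(1 - a)`, the last of which is
positive for `0 ≤ a < b ≤ 1`. -/

open Set

theorem strictMonoOn_div_of_mul_lt_mul {ι 𝕜 : Type*} [Preorder ι] [Field 𝕜] [LinearOrder 𝕜]
    [IsStrictOrderedRing 𝕜] {f h : ι → 𝕜} {S : Set ι} (hh : ∀ x ∈ S, 0 < h x)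
    (hcross : ∀ a ∈ S, ∀ b ∈ S, a < b → f a * h b < f b * h a) :
    StrictMonoOn (fun x => f x / h x) S := fun a ha b hb hab =>
  (div_lt_div_iff₀ (hh a ha) (hh b hb)).2 (hcross a ha b hb hab)

namespace RationalQuadraticSpline

variable (y₀ y₁ δ₀ δ₁ : ℝ)

def numerator (ξ : ℝ) : ℝ :=
  (y₁ - y₀) * y₁ * ξ ^ 2 + (y₀ * δ₁ + y₁ * δ₀) * ξ * (1 - ξ) + (y₁ - y₀) * y₀ * (1 - ξ) ^ 2

def denominator (ξ : ℝ) : ℝ :=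
  (y₁ - y₀) * ξ ^ 2 + (δ₀ + δ₁) * ξ * (1 - ξ) + (y₁ - y₀) * (1 - ξ) ^ 2

variable {y₀ y₁ δ₀ δ₁}

theorem denominator_pos (hy : y₀ < y₁) (hδ : 0 ≤ δ₀ + δ₁) {ξ : ℝ} (hξ : ξ ∈ Icc (0 : ℝ) 1) :
    0 < denominator y₀ y₁ δ₀ δ₁ ξ := by
  obtain ⟨h0, h1⟩ := hξ
  have hends : 0 < (y₁ - y₀) * (ξ ^ 2 + (1 - ξ) ^ 2) :=
    mul_pos (sub_pos.2 hy) (by nlinarith [sq_nonneg (2 * ξ - 1)])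
  have hmid : 0 ≤ (δ₀ + δ₁) * ξ * (1 - ξ) := mul_nonneg (mul_nonneg hδ h0) (sub_nonneg.2 h1)
  unfold denominator
  linarith

theorem numerator_div_denominator_zero (hy : y₀ ≠ y₁) :
    numerator y₀ y₁ δ₀ δ₁ 0 / denominator y₀ y₁ δ₀ δ₁ 0 = y₀ := by
  have hnum : numerator y₀ y₁ δ₀ δ₁ 0 = (y₁ - y₀) * y₀ := by simp [numerator]
  have hden : denominator y₀ y₁ δ₀ δ₁ 0 = y₁ - y₀ := by simp [denominator]
  rw [hnum, hden, mul_div_cancel_left₀ _ (sub_ne_zero.2 hy.symm)]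

theorem numerator_div_denominator_one (hy : y₀ ≠ y₁) :
    numerator y₀ y₁ δ₀ δ₁ 1 / denominator y₀ y₁ δ₀ δ₁ 1 = y₁ := by
  have hnum : numerator y₀ y₁ δ₀ δ₁ 1 = (y₁ - y₀) * y₁ := by simp [numerator]
  have hden : denominator y₀ y₁ δ₀ δ₁ 1 = y₁ - y₀ := by simp [denominator]
  rw [hnum, hden, mul_div_cancel_left₀ _ (sub_ne_zero.2 hy.symm)]

theorem numerator_mul_denominator_sub (a b : ℝ) :
    numerator y₀ y₁ δ₀ δ₁ b * denominator y₀ y₁ δ₀ δ₁ a -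
        numerator y₀ y₁ δ₀ δ₁ a * denominator y₀ y₁ δ₀ δ₁ b =
      (b - a) * (y₁ - y₀) ^ 2 *
        (δ₁ * (a * b) + δ₀ * ((1 - a) * (1 - b)) + (y₁ - y₀) * (a * (1 - b) + b * (1 - a))) := by
  simp only [numerator, denominator]
  ring

theorem bernstein_combination_pos {p q r a b : ℝ} (hp : 0 ≤ p) (hq : 0 ≤ q) (hr : 0 < r)
    (ha : 0 ≤ a) (hb : b ≤ 1) (hab : a < b) :
    0 < p * (a * b) + q * ((1 - a) * (1 - b)) + r * (a * (1 - b) + b * (1 - a)) := by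
  have hpab : 0 ≤ p * (a * b) := mul_nonneg hp (mul_nonneg ha (by linarith))
  have hqab : 0 ≤ q * ((1 - a) * (1 - b)) := mul_nonneg hq (mul_nonneg (by linarith) (by linarith))
  have hrab : 0 < r * (a * (1 - b) + b * (1 - a)) :=
    mul_pos hr (add_pos_of_nonneg_of_pos (mul_nonneg ha (by linarith))
      (mul_pos (by linarith) (by linarith)))
  linarith

theorem strictMonoOn_numerator_div_denominator (hy : y₀ < y₁) (hδ₀ : 0 ≤ δ₀) (hδ₁ : 0 ≤ δ₁) :
    StrictMonoOn (fun ξ => numerator y₀ y₁ δ₀ δ₁ ξ / denominator y₀ y₁ δ₀ δ₁ ξ) (Icc 0 1) := by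
  refine strictMonoOn_div_of_mul_lt_mul (fun ξ hξ => denominator_pos hy (by linarith) hξ) ?_
  rintro a ⟨ha0, -⟩ b ⟨-, hb1⟩ hab
  have hcross := numerator_mul_denominator_sub (y₀ := y₀) (y₁ := y₁) (δ₀ := δ₀) (δ₁ := δ₁) a b
  have hprod : 0 < (b - a) * (y₁ - y₀) ^ 2 *
      (δ₁ * (a * b) + δ₀ * ((1 - a) * (1 - b)) + (y₁ - y₀) * (a * (1 - b) + b * (1 - a))) :=
    mul_pos (mul_pos (sub_pos.2 hab) (pow_pos (sub_pos.2 hy) 2))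
      (bernstein_combination_pos hδ₁ hδ₀ (sub_pos.2 hy) ha0 hb1 hab)
  linarith

end RationalQuadraticSpline

open RationalQuadraticSpline in
/-- A strictly monotone increasing rational-quadratic spline segment is invertible:
with `s = y₁ - y₀ > 0` and `δ₀, δ₁ > 0`, the denominator `β` is positive on `[0,1]`,
`g(0) = y₀`, `g(1) = y₁`, and `g` is strictly increasing on `[0,1]`. -/
theorem stmt_13 (y₀ y₁ δ₀ δ₁ s : ℝ) (hy : y₀ < y₁) (hδ₀ : 0 < δ₀) (hδ₁ : 0 < δ₁)
    (hs : s = y₁ - y₀) (α β g : ℝ → ℝ)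
    (hα : ∀ ξ, α ξ = s * y₁ * ξ ^ 2 + (y₀ * δ₁ + y₁ * δ₀) * ξ * (1 - ξ) + s * y₀ * (1 - ξ) ^ 2)
    (hβ : ∀ ξ, β ξ = s * ξ ^ 2 + (δ₀ + δ₁) * ξ * (1 - ξ) + s * (1 - ξ) ^ 2)
    (hg : ∀ ξ, g ξ = α ξ / β ξ) :
    (∀ ξ ∈ Set.Icc (0 : ℝ) 1, 0 < β ξ) ∧ g 0 = y₀ ∧ g 1 = y₁ ∧
      StrictMonoOn g (Set.Icc (0 : ℝ) 1) := by
  subst hs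
  obtain rfl : α = numerator y₀ y₁ δ₀ δ₁ := funext hα
  obtain rfl : β = denominator y₀ y₁ δ₀ δ₁ := funext hβ
  obtain rfl : g = fun ξ => numerator y₀ y₁ δ₀ δ₁ ξ / denominator y₀ y₁ δ₀ δ₁ ξ := funext hg
  exact ⟨fun ξ hξ => denominator_pos hy (by positivity) hξ,
    numerator_div_denominator_zero hy.ne, numerator_div_denominator_one hy.ne,
    strictMonoOn_numerator_div_denominator hy hδ₀.le hδ₁.le⟩
end
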